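/- arXiv:2505.10090 — 2 statements merged into one kernel-verified Lean document; each statement's English description precedes it below -/
import Mathlib

section
/- Let p be an odd prime and α a positive integer, and set n = p^α. Then every vertex of the graph Cl₂(ℤ_n) has degree at most 1, and the number of edges of Cl₂(ℤ_n) equals (φ(n) − 2)/2; moreover, exactly 2 vertices of Cl₂(ℤ_n) are isolated (have degree 0). -/
/-! In a local ring the only nonzero idempotent is `1`, so the vertices of `Cl₂(R)` are in effect
the units, and `u` is adjacent exactly to `u⁻¹`, provided `u ≠ u⁻¹`. Hence no degree exceeds 1,
and the isolated vertices are the square roots of `1`; these are `±1` when `2` is a unit, since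
`(u + 1) + (1 - u) = 2` forces one factor of `u * u - 1` to be a unit. By the handshake lemma the
other `|Rˣ| - 2` vertices pair up into edges. Finally `ZMod (p ^ α)` is local, being a quotient
of `ℤ_[p]`, and `2` is a unit in it for odd `p`. -/

/-- The clean graph `Cl₂(R)`: vertices are pairs `(e, u)` where `e` is a nonzero
idempotent of `R` and `u` is a unit of `R`; two distinct vertices `(e, u)` and
`(f, v)` are adjacent iff `e * f = 0` or `u * v = 1`. -/
def Cl2 (R : Type*) [CommRing R] :
    SimpleGraph ({e : R // IsIdempotentElem e ∧ e ≠ 0} × Rˣ) where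
  Adj v w := v ≠ w ∧ (((v.1 : R) * (w.1 : R) = 0) ∨ ((v.2 : R) * (w.2 : R) = 1))
  symm := by
    constructor
    rintro v w ⟨hne, h⟩
    refine ⟨hne.symm, ?_⟩
    rcases h with h | h
    · left; rwa [mul_comm]
    · right; rwa [mul_comm]
  loopless := by constructor; rintro v ⟨h, -⟩; exact h rfl

/-- The Sombor index of a graph: the sum over edges `uv` of
`√(deg(u)² + deg(v)²)`. -/
noncomputable def somborIndex {V : Type*} (G : SimpleGraph V) : ℝ :=
  ∑ᶠ e ∈ G.edgeSet,
    Sym2.lift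
      ⟨fun u v =>
        Real.sqrt (((G.neighborSet u).ncard : ℝ) ^ 2 + ((G.neighborSet v).ncard : ℝ) ^ 2),
        fun u v => by simp [add_comm]⟩ e

theorem IsLocalRing.isIdempotentElem_iff {R : Type*} [CommRing R] [IsLocalRing R] {e : R} :
    IsIdempotentElem e ↔ e = 0 ∨ e = 1 := by
  refine ⟨fun he => ?_, by rintro (rfl | rfl); exacts [.zero, .one]⟩
  rcases IsLocalRing.isUnit_or_isUnit_one_sub_self e with h | h
  · exact .inr (h.mul_left_cancel (he.eq.trans (mul_one e).symm))
  · exact .inl (h.mul_left_eq_zero.1 (by rw [mul_sub, mul_one, he.eq, sub_self]))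

theorem IsLocalRing.mul_self_eq_one_iff_of_isUnit_two {R : Type*} [CommRing R] [IsLocalRing R]
    (h2 : IsUnit (2 : R)) {u : R} : u * u = 1 ↔ u = 1 ∨ u = -1 := by
  refine ⟨fun hu => ?_, by rintro (rfl | rfl) <;> simp⟩
  have hsum : (u + 1) + (1 - u) = 2 := by ring
  rcases IsLocalRing.isUnit_or_isUnit_of_isUnit_add (hsum ▸ h2) with h | h
  · refine .inl (sub_eq_zero.1 (h.mul_right_eq_zero.1 ?_))
    linear_combination hu
  · refine .inr (eq_neg_of_add_eq_zero_left (h.mul_right_eq_zero.1 ?_))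
    linear_combination -hu

theorem SimpleGraph.two_mul_ncard_edgeSet_add_ncard_isIsolated {V : Type*} [Finite V]
    (G : SimpleGraph V) (h : ∀ v, (G.neighborSet v).ncard ≤ 1) :
    2 * G.edgeSet.ncard + {v | G.IsIsolated v}.ncard = Nat.card V := by
  classical
  have := Fintype.ofFinite V
  have hdeg : ∀ v, G.degree v = (G.neighborSet v).ncard := fun v => by
    rw [← card_neighborSet_eq_degree, Set.ncard_eq_toFinset_card', Set.toFinset_card]
  have hiso : {v | G.IsIsolated v} = ↑(Finset.univ.filter fun v => G.degree v = 0) := by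
    ext v
    simp [degree_eq_zero_iff_notMem_support, notMem_support_iff_isIsolated]
  rw [← coe_edgeFinset, Set.ncard_coe_finset, ← sum_degrees_eq_twice_card_edges, hiso,
    Set.ncard_coe_finset, Finset.card_filter, ← Finset.sum_add_distrib, Nat.card_eq_fintype_card,
    ← Finset.card_univ, Finset.card_eq_sum_ones]
  refine Finset.sum_congr rfl fun v _ => ?_
  have := hdeg v ▸ h v
  split_ifs <;> omega

namespace Cl2

variable {R : Type*} [CommRing R] [IsLocalRing R]

instance : Unique {e : R // IsIdempotentElem e ∧ e ≠ 0} where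
  default := ⟨1, .one, one_ne_zero⟩
  uniq e := Subtype.ext ((IsLocalRing.isIdempotentElem_iff.1 e.2.1).resolve_left e.2.2)

@[simp]
theorem coe_default : ((default : {e : R // IsIdempotentElem e ∧ e ≠ 0}) : R) = 1 := rfl

theorem vertex_eq_iff {v w : {e : R // IsIdempotentElem e ∧ e ≠ 0} × Rˣ} :
    v = w ↔ v.2 = w.2 := by
  rw [Prod.ext_iff, Subsingleton.elim v.1 w.1]
  exact and_iff_right rfl

theorem adj_iff {v w : {e : R // IsIdempotentElem e ∧ e ≠ 0} × Rˣ} :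
    (Cl2 R).Adj v w ↔ v.2 ≠ w.2 ∧ v.2 * w.2 = 1 := by
  have hfst : (v.1 : R) * w.1 ≠ 0 := by
    simp [Subsingleton.elim v.1 default, Subsingleton.elim w.1 default]
  simp only [Cl2, hfst, false_or, ne_eq, vertex_eq_iff, Units.ext_iff, Units.val_mul, Units.val_one]

variable (v : {e : R // IsIdempotentElem e ∧ e ≠ 0} × Rˣ)

theorem neighborSet_eq :
    (Cl2 R).neighborSet v = {(default, v.2⁻¹)} \ {v} := by
  ext w
  rw [SimpleGraph.mem_neighborSet, adj_iff, Set.mem_sdiff, Set.mem_singleton_iff,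
    Set.mem_singleton_iff, vertex_eq_iff, vertex_eq_iff, eq_inv_iff_mul_eq_one, mul_comm, ne_comm]
  exact and_comm

theorem ncard_neighborSet_le_one :
    ((Cl2 R).neighborSet v).ncard ≤ 1 := by
  rw [neighborSet_eq]
  exact (Set.ncard_le_ncard Set.sdiff_subset).trans (Set.ncard_singleton _).le

theorem isIsolated_iff :
    (Cl2 R).IsIsolated v ↔ v.2 * v.2 = 1 := by
  rw [← SimpleGraph.neighborSet_eq_empty, neighborSet_eq, Set.sdiff_eq_empty,
    Set.singleton_subset_singleton, vertex_eq_iff, eq_comm, eq_inv_iff_mul_eq_one]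

theorem ncard_isIsolated_of_isUnit_two (h2 : IsUnit (2 : R)) :
    {v : {e : R // IsIdempotentElem e ∧ e ≠ 0} × Rˣ | (Cl2 R).IsIsolated v}.ncard = 2 := by
  have hset : {v : {e : R // IsIdempotentElem e ∧ e ≠ 0} × Rˣ | (Cl2 R).IsIsolated v} =
      {(default, 1), (default, -1)} := by
    ext v
    rw [Set.mem_ofPred_eq, isIsolated_iff, Units.ext_iff, Units.val_mul, Units.val_one,
      IsLocalRing.mul_self_eq_one_iff_of_isUnit_two h2]
    simp only [Set.mem_insert_iff, Set.mem_singleton_iff, vertex_eq_iff, Units.ext_iff,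
      Units.val_one, Units.val_neg]
  have hne : (1 : R) ≠ -1 := fun h => h2.ne_zero (by linear_combination h)
  rw [hset, Set.ncard_pair (by simp [Units.ext_iff, hne])]

end Cl2

theorem ZMod.isLocalRing_prime_pow {p : ℕ} [hp : Fact p.Prime] {k : ℕ} (hk : 0 < k) :
    IsLocalRing (ZMod (p ^ k)) :=
  have : Nontrivial (ZMod (p ^ k)) :=
    ZMod.nontrivial_iff.2 (Nat.one_lt_pow hk.ne' hp.out.one_lt).ne'
  .of_surjective' (PadicInt.toZModPow k) (ZMod.ringHom_surjective _)

theorem cl2_prime_power_structure (p : ℕ) (hp : p.Prime) (hodd : p ≠ 2) (α : ℕ)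
    (hα : 0 < α) (n : ℕ) (hn : n = p ^ α) :
    (∀ v, ((Cl2 (ZMod n)).neighborSet v).ncard ≤ 1) ∧
    (Cl2 (ZMod n)).edgeSet.ncard = (n.totient - 2) / 2 ∧
    {v | (Cl2 (ZMod n)).neighborSet v = ∅}.ncard = 2 := by
  subst hn
  have := Fact.mk hp
  have := ZMod.isLocalRing_prime_pow (p := p) hα
  have htwo : IsUnit (2 : ZMod (p ^ α)) := by
    simpa using (ZMod.isUnit_natCast_iff_not_dvd_pow hp hα (a := 2)).2
      fun h => hodd ((Nat.prime_dvd_prime_iff_eq hp Nat.prime_two).1 h)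
  have hcard : Nat.card ({e : ZMod (p ^ α) // IsIdempotentElem e ∧ e ≠ 0} × (ZMod (p ^ α))ˣ) =
      (p ^ α).totient := by
    rw [Nat.card_prod, Nat.card_unique, one_mul, Nat.card_eq_fintype_card,
      ZMod.card_units_eq_totient]
  have hedges := (Cl2 (ZMod (p ^ α))).two_mul_ncard_edgeSet_add_ncard_isIsolated
    Cl2.ncard_neighborSet_le_one
  rw [Cl2.ncard_isIsolated_of_isUnit_two htwo, hcard] at hedges
  simp only [SimpleGraph.neighborSet_eq_empty]
  exact ⟨Cl2.ncard_neighborSet_le_one, by omega, Cl2.ncard_isIsolated_of_isUnit_two htwo⟩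
end

section
/- Let α ≥ 3 be an integer and n = 2^α. Then the Sombor index of Cl₂(ℤ_n) equals ((φ(n) − 4)/2) · √2, where φ is Euler's totient function. -/
/-! `ZMod (2 ^ α)` is a local ring, so its only nonzero idempotent is `1` and two vertices of
`Cl₂` are adjacent exactly when their units are mutually inverse. Hence `Cl₂(ℤ_n)` is a matching:
every unit `u` with `u² ≠ 1` is joined to `u⁻¹` alone, and the four square roots of unity
`±1, 2^(α-1) ± 1` are isolated. The `(φ(n) - 4) / 2` edges each contribute `√(1² + 1²)`. -/

open Finset

namespace SimpleGraph

variable {V : Type*} [Fintype V] (G : SimpleGraph V) [DecidableRel G.Adj]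

theorem somborIndex_eq_of_degree_le_one (h : ∀ v, G.degree v ≤ 1) :
    somborIndex G = (∑ v, G.degree v : ℕ) / 2 * √2 := by
  have hterm : ∀ e ∈ G.edgeFinset, Sym2.lift ⟨fun u v =>
      √(((G.neighborSet u).ncard : ℝ) ^ 2 + ((G.neighborSet v).ncard : ℝ) ^ 2),
      fun u v => by simp [add_comm]⟩ e = √2 := by
    intro e he
    induction e with
    | _ v w =>
      have hdeg : ∀ {x y}, G.Adj x y → (G.neighborSet x).ncard = 1 := fun hxy => by
        rw [Set.ncard_eq_toFinset_card', ← neighborFinset_def, card_neighborFinset_eq_degree]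
        exact le_antisymm (h _) (G.degree_pos_iff_exists_adj _ |>.2 ⟨_, hxy⟩)
      have hvw : G.Adj v w := G.mem_edgeFinset.1 he
      simp only [Sym2.lift_mk, hdeg hvw, hdeg hvw.symm]
      norm_num
  rw [somborIndex, ← coe_edgeFinset, finsum_mem_coe_finset, sum_congr rfl hterm, sum_const,
    nsmul_eq_mul, sum_degrees_eq_twice_card_edges]
  push_cast
  ring

end SimpleGraph

theorem IsLocalRing.eq_zero_or_eq_one_of_isIdempotentElem {R : Type*} [CommRing R] [IsLocalRing R]
    {e : R} (he : IsIdempotentElem e) : e = 0 ∨ e = 1 := by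
  rcases IsLocalRing.isUnit_or_isUnit_one_sub_self e with h | h
  · exact .inr (IsIdempotentElem.iff_eq_one_of_isUnit h |>.1 he)
  · exact .inl (by simpa using (h.mul_right_eq_zero).1 he.one_sub_mul_self)

section LocalRing

variable {R : Type*} [CommRing R] [IsLocalRing R]

instance : Unique {e : R // IsIdempotentElem e ∧ e ≠ 0} where
  default := ⟨1, .one, one_ne_zero⟩
  uniq e := Subtype.ext <|
    (IsLocalRing.eq_zero_or_eq_one_of_isIdempotentElem e.2.1).resolve_left e.2.2

theorem cl2_adj_iff_of_isLocalRing {v w : {e : R // IsIdempotentElem e ∧ e ≠ 0} × Rˣ} :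
    (Cl2 R).Adj v w ↔ v ≠ w ∧ w = (v.1, v.2⁻¹) := by
  have hfst : ∀ e : {e : R // IsIdempotentElem e ∧ e ≠ 0}, (e : R) = 1 := fun e =>
    congrArg Subtype.val (Subsingleton.elim e default)
  simp only [Cl2, hfst, mul_one, one_ne_zero, false_or, Prod.ext_iff, Subsingleton.elim w.1 v.1,
    true_and, eq_inv_iff_mul_eq_one, mul_comm w.2, ← Units.val_mul, Units.val_eq_one]

theorem cl2_degree_of_isLocalRing [Fintype R] [DecidableEq R] [DecidableRel (Cl2 R).Adj]
    (v : {e : R // IsIdempotentElem e ∧ e ≠ 0} × Rˣ) :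
    (Cl2 R).degree v = if v.2 * v.2 = 1 then 0 else 1 := by
  have hnbr : (Cl2 R).neighborFinset v = ({(v.1, v.2⁻¹)} : Finset _).erase v := by
    ext w
    simp [cl2_adj_iff_of_isLocalRing, ne_comm]
  have hself : v = (v.1, v.2⁻¹) ↔ v.2 * v.2 = 1 := by
    simp [Prod.ext_iff, eq_inv_iff_mul_eq_one]
  rw [← SimpleGraph.card_neighborFinset_eq_degree, hnbr, card_erase_eq_ite]
  simp [hself]

theorem somborIndex_cl2_of_isLocalRing [Fintype R] [DecidableEq R] :
    somborIndex (Cl2 R) = ((Fintype.card Rˣ : ℝ) - #{u : Rˣ | u * u = 1}) / 2 * √2 := by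
  -- not `classical`, which would also replace the `Fintype` instance on the vertices
  let _ : DecidableRel (Cl2 R).Adj := Classical.decRel _
  have hdeg := cl2_degree_of_isLocalRing (R := R)
  have hsum : ∑ v, (Cl2 R).degree v = #{u : Rˣ | ¬u * u = 1} := by
    simp only [hdeg, Fintype.sum_prod_type, Fintype.sum_unique, card_filter]
    exact sum_congr rfl fun u _ => by split_ifs <;> rfl
  have hcard := card_filter_add_card_filter_not (s := univ) (fun u : Rˣ => u * u = 1)
  rw [SimpleGraph.somborIndex_eq_of_degree_le_one _ fun v => by rw [hdeg]; split_ifs <;> omega,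
    hsum, ← card_univ, ← hcard]
  push_cast
  ring

end LocalRing

theorem Units.card_filter_mul_self_eq_one {M : Type*} [Monoid M] [Fintype M] [DecidableEq M]
    [Fintype Mˣ] : #{u : Mˣ | u * u = 1} = #{x : M | x * x = 1} := by
  refine card_nbij (↑) (fun u hu => ?_) Units.val_injective.injOn fun x hx => ?_
  · simp_all [← Units.val_mul]
  · simp only [coe_filter, mem_univ, true_and, Set.mem_ofPred_eq] at hx
    exact ⟨⟨x, x, hx, hx⟩, by simp [Units.ext_iff, hx], rfl⟩

namespace ZMod

theorem isUnit_or_isNilpotent_of_prime_pow {p k : ℕ} (hp : p.Prime) (x : ZMod (p ^ k)) :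
    IsUnit x ∨ IsNilpotent x := by
  have : NeZero (p ^ k) := ⟨pow_ne_zero _ hp.ne_zero⟩
  have hx : (x.val : ZMod (p ^ k)) = x := natCast_zmod_val x
  rcases Nat.coprime_or_dvd_of_prime hp x.val with h | ⟨m, hm⟩
  · exact .inl (hx ▸ (isUnit_iff_coprime _ _).2 (h.symm.pow_right k))
  · refine .inr ⟨k, ?_⟩
    rw [← hx, hm, Nat.cast_mul, mul_pow, ← Nat.cast_pow, natCast_self, zero_mul]

theorem isLocalRing_prime_pow_s5 {p k : ℕ} (hp : p.Prime) (hk : k ≠ 0) :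
    IsLocalRing (ZMod (p ^ k)) :=
  have : Nontrivial (ZMod (p ^ k)) := nontrivial_iff.2 (by simp [hp.ne_one, hk])
  .of_isUnit_or_isUnit_one_sub_self fun x =>
    (isUnit_or_isNilpotent_of_prime_pow hp x).imp_right IsNilpotent.isUnit_one_sub

end ZMod

theorem Int.two_mul_dvd_or_two_mul_dvd_sub_of_dvd {d x : ℤ} (h : d ∣ x) :
    2 * d ∣ x ∨ 2 * d ∣ x - d := by
  obtain ⟨m, rfl⟩ := h
  obtain ⟨t, rfl | rfl⟩ := Int.even_or_odd' m
  · exact .inl ⟨t, by ring⟩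
  · exact .inr ⟨t, by ring⟩

theorem Int.two_pow_dvd_sub_one_or_add_one {k : ℕ} {b : ℤ}
    (h : 2 ^ (k + 2) ∣ (b - 1) * (b + 1)) : 2 ^ (k + 1) ∣ b - 1 ∨ 2 ^ (k + 1) ∣ b + 1 := by
  obtain ⟨j, rfl⟩ : ∃ j, b = 2 * j + 1 := by
    rcases Int.prime_two.dvd_or_dvd ((dvd_pow_self 2 (by omega)).trans h) with ⟨m, hm⟩ | ⟨m, hm⟩
    · exact ⟨m, by omega⟩
    · exact ⟨m - 1, by omega⟩
  have hj : 2 ^ k ∣ j * (j + 1) := by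
    rw [show (2 : ℤ) ^ (k + 2) = 4 * 2 ^ k by ring,
      show (2 * j + 1 - 1) * (2 * j + 1 + 1) = 4 * (j * (j + 1)) by ring] at h
    exact (mul_dvd_mul_iff_left four_ne_zero).1 h
  rcases Int.even_or_odd j with ⟨t, rfl⟩ | ⟨t, rfl⟩
  · have := Int.prime_two.pow_dvd_of_dvd_mul_right k (by omega) hj
    exact .inl (by simpa [pow_succ'] using mul_dvd_mul_left 2 this)
  · have := Int.prime_two.pow_dvd_of_dvd_mul_left k (by omega) hj
    exact .inr (by simpa [pow_succ', mul_add, add_assoc] using mul_dvd_mul_left 2 this)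

namespace ZMod

theorem mul_self_eq_one_iff_two_pow {k : ℕ} {x : ZMod (2 ^ (k + 2))} :
    x * x = 1 ↔ x = 1 ∨ x = -1 ∨ x = 2 ^ (k + 1) + 1 ∨ x = 2 ^ (k + 1) - 1 := by
  have hz : ∀ y : ℤ, 2 * 2 ^ (k + 1) ∣ y → (y : ZMod (2 ^ (k + 2))) = 0 := fun y hy =>
    (intCast_zmod_eq_zero_iff_dvd _ _).2 (by push_cast; rwa [pow_succ' _ (k + 1)])
  have h0 : (2 : ZMod (2 ^ (k + 2))) ^ (k + 2) = 0 := by exact_mod_cast natCast_self (2 ^ (k + 2))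
  have hc2 : (2 : ZMod (2 ^ (k + 2))) * 2 ^ (k + 1) = 0 := by rw [← pow_succ']; exact h0
  constructor
  · intro hx
    obtain ⟨b, rfl⟩ := intCast_surjective x
    have hb : 2 ^ (k + 2) ∣ (b - 1) * (b + 1) := by
      exact_mod_cast (intCast_zmod_eq_zero_iff_dvd _ (2 ^ (k + 2))).1
        (by push_cast; linear_combination hx)
    rcases Int.two_pow_dvd_sub_one_or_add_one hb with h | h <;>
      rcases Int.two_mul_dvd_or_two_mul_dvd_sub_of_dvd h with h' | h' <;>
      have := hz _ h' <;> push_cast at this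
    · exact .inl (by linear_combination this)
    · exact .inr (.inr (.inl (by linear_combination this)))
    · exact .inr (.inl (by linear_combination this))
    · exact .inr (.inr (.inr (by linear_combination this)))
  · have hcc : (2 : ZMod (2 ^ (k + 2))) ^ (k + 1) * 2 ^ (k + 1) = 0 := by
      rw [← pow_add, show k + 1 + (k + 1) = k + 2 + k by ring,
        pow_add (2 : ZMod (2 ^ (k + 2))), h0, zero_mul]
    rintro (rfl | rfl | rfl | rfl)
    · ring
    · ring
    · linear_combination hcc + hc2
    · linear_combination hcc - hc2

theorem card_filter_mul_self_eq_one_two_pow {k : ℕ} (hk : 1 ≤ k) :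
    #{x : ZMod (2 ^ (k + 2)) | x * x = 1} = 4 := by
  have hne : ∀ y : ℤ, 0 < y → y < 2 ^ (k + 2) → (y : ZMod (2 ^ (k + 2))) ≠ 0 := by
    intro y hy hlt hy0
    have := Int.le_of_dvd hy ((intCast_zmod_eq_zero_iff_dvd _ _).1 hy0)
    push_cast at this
    omega
  have hc : (4 : ℤ) ≤ 2 ^ (k + 1) := by
    calc (4 : ℤ) = 2 ^ 2 := by norm_num
      _ ≤ 2 ^ (k + 1) := pow_le_pow_right₀ (by norm_num) (by omega)
  have hN : (2 : ℤ) ^ (k + 2) = 2 * 2 ^ (k + 1) := pow_succ' _ _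
  have h2 := hne 2 (by norm_num) (by omega)
  have hc0 := hne (2 ^ (k + 1)) (by omega) (by omega)
  have hcm := hne (2 ^ (k + 1) - 2) (by omega) (by omega)
  have hcp := hne (2 ^ (k + 1) + 2) (by omega) (by omega)
  push_cast at h2 hc0 hcm hcp
  have hS : ({x : ZMod (2 ^ (k + 2)) | x * x = 1} : Finset _) =
      {1, -1, 2 ^ (k + 1) + 1, 2 ^ (k + 1) - 1} := by
    ext x
    simp [mul_self_eq_one_iff_two_pow]
  rw [hS, card_insert_of_notMem, card_insert_of_notMem, card_pair]
  · intro h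
    exact h2 (by linear_combination h)
  · simp only [mem_insert, mem_singleton, not_or]
    exact ⟨fun h => hcp (by linear_combination -h), fun h => hc0 (by linear_combination -h)⟩
  · simp only [mem_insert, mem_singleton, not_or]
    exact ⟨fun h => h2 (by linear_combination h), fun h => hc0 (by linear_combination -h),
      fun h => hcm (by linear_combination -h)⟩

end ZMod

theorem sombor_two_power (α : ℕ) (hα : 3 ≤ α) (n : ℕ) (hn : n = 2 ^ α) :
    somborIndex (Cl2 (ZMod n)) = ((n.totient : ℝ) - 4) / 2 * Real.sqrt 2 := by
  obtain ⟨k, rfl⟩ : ∃ k, α = k + 2 := ⟨α - 2, by omega⟩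
  subst hn
  have : IsLocalRing (ZMod (2 ^ (k + 2))) := ZMod.isLocalRing_prime_pow_s5 Nat.prime_two (by omega)
  rw [somborIndex_cl2_of_isLocalRing, ZMod.card_units_eq_totient, Units.card_filter_mul_self_eq_one,
    ZMod.card_filter_mul_self_eq_one_two_pow (by omega)]
  norm_num
end
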